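/- Let B_1 = [[1,0],[0,−1]], B_2 = [[0,1],[1,0]], B_3 = [[0,1],[−1,0]] be 2×2 real matrices (B_1, B_2 symmetric, B_3 antisymmetric). Then Σ_{r,s=1}^3 ‖[B_r, B_s]‖² > (Σ_{r=1}^3 ‖B_r‖²)²; in fact Σ_{r,s=1}^3 ‖[B_r, B_s]‖² = 48 while (Σ_{r=1}^3 ‖B_r‖²)² = 36. -/
import Mathlib

open Matrix BigOperators

/-- The squared Frobenius norm: sum of squares of the entries. -/
noncomputable def frobSq {n : ℕ} (A : Matrix (Fin n) (Fin n) ℝ) : ℝ :=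
  ∑ i, ∑ j, (A i j) ^ 2

/-- The commutator of two matrices. -/
def mcomm {n : ℕ} (A B : Matrix (Fin n) (Fin n) ℝ) : Matrix (Fin n) (Fin n) ℝ :=
  A * B - B * A

/-- The example showing that the DDVV inequality fails for mixed families of symmetric
and antisymmetric matrices: for `B₁ = [[1,0],[0,-1]]`, `B₂ = [[0,1],[1,0]]`,
`B₃ = [[0,1],[-1,0]]` we have `∑_{r,s} ‖[B_r,B_s]‖² = 48 > 36 = (∑_r ‖B_r‖²)²`. -/
theorem ddvv_fails_mixed_example (B : Fin 3 → Matrix (Fin 2) (Fin 2) ℝ)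
    (hB1 : B 0 = !![1, 0; 0, -1]) (hB2 : B 1 = !![0, 1; 1, 0])
    (hB3 : B 2 = !![0, 1; -1, 0]) :
    (∑ r, ∑ s, frobSq (mcomm (B r) (B s))) = 48 ∧
    (∑ r, frobSq (B r)) ^ 2 = 36 ∧
    (∑ r, ∑ s, frobSq (mcomm (B r) (B s))) > (∑ r, frobSq (B r)) ^ 2 := by
  simp only [frobSq, mcomm, Fin.sum_univ_three, Fin.sum_univ_two, hB1, hB2, hB3]
  norm_num [Matrix.mul_apply, Fin.sum_univ_two, Matrix.sub_apply]
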